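/- arXiv:2307.00788 — 5 statements merged into one kernel-verified Lean document; each statement's English description precedes it below -/
import Mathlib

section
/- Let s, s̄, x², x³ be real numbers with |s̄| > |s|. Then there exists a real 4×4 matrix Λ satisfying Λᵀ η Λ = η (where η = diag(−1,1,1,1)), with det Λ = 1 and Λ₀₀ > 0, such that Λ maps the vector (s, s̄, x², x³) to (−s, −s̄, x², x³). -/
/-- The Minkowski metric matrix `η = diag(−1,1,1,1)` on `ℝ⁴`. -/
def minkowskiEta : Matrix (Fin 4) (Fin 4) ℝ := Matrix.diagonal ![(-1 : ℝ), 1, 1, 1]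

set_option maxHeartbeats 2000000 in
lemma aux_lorentz (s sbar x2 x3 : ℝ) (h : |s| < |sbar|)
    (p q r t : ℝ)
    (h1 : p*p + r*r = 1) (h2 : p*q + r*t = 0) (h3 : q*q + t*t = 1)
    (hdet : p*t - q*r = -1)
    (hx2 : p*x2 + q*x3 = x2) (hx3 : r*x2 + t*x3 = x3) :
    ∃ Λ : Matrix (Fin 4) (Fin 4) ℝ,
      Λ.transpose * minkowskiEta * Λ = minkowskiEta ∧
      Λ.det = 1 ∧
      0 < Λ 0 0 ∧
      Λ.mulVec ![s, sbar, x2, x3] = ![-s, -sbar, x2, x3] := by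
  have hs2 : s^2 < sbar^2 := by nlinarith [abs_nonneg s, sq_abs s, sq_abs sbar, abs_nonneg sbar]
  have hQ : 0 < sbar^2 - s^2 := by linarith
  have hQ0 : sbar^2 - s^2 ≠ 0 := ne_of_gt hQ
  set A : ℝ := (sbar^2 + s^2)/(sbar^2 - s^2) with hAdef
  set B : ℝ := 2*s*sbar/(sbar^2 - s^2) with hBdef
  have hsbar : sbar ≠ 0 := by
    intro hc; subst hc; simp at h; exact absurd h (abs_nonneg s).not_gt
  have hA : 0 < A := div_pos (by positivity) hQ
  have hAB : A*A - B*B = 1 := by rw [hAdef, hBdef]; field_simp; ring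
  have hv1 : A*s - B*sbar = -s := by rw [hAdef, hBdef]; field_simp; ring
  have hv2 : B*s - A*sbar = -sbar := by rw [hAdef, hBdef]; field_simp; ring
  clear_value A B
  have heta : minkowskiEta = !![(-1:ℝ),0,0,0; 0,1,0,0; 0,0,1,0; 0,0,0,1] := by
    ext i j; fin_cases i <;> fin_cases j <;> rfl
  refine ⟨!![A, -B, 0, 0; B, -A, 0, 0; 0, 0, p, q; 0, 0, r, t], ?_, ?_, ?_, ?_⟩
  · rw [show (!![A, -B, 0, 0; B, -A, 0, 0; 0, 0, p, q; 0, 0, r, t]).transpose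
        = !![A, B, 0, 0; -B, -A, 0, 0; 0, 0, p, r; 0, 0, q, t] from by
      ext i j; fin_cases i <;> fin_cases j <;> rfl]
    rw [heta]
    ext i j
    fin_cases i <;> fin_cases j <;>
      simp [Matrix.mul_apply, Fin.sum_univ_four, Matrix.vecHead, Matrix.vecTail] <;>
      linarith [h1, h2, h3, hAB]
  · rw [Matrix.det_succ_row_zero]
    simp [Fin.sum_univ_four, Matrix.det_fin_three, Matrix.vecHead, Matrix.vecTail,
      Matrix.submatrix, Fin.succAbove]
    nlinarith [hdet, hAB]
  · simpa using hA
  · ext i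
    fin_cases i <;>
      simp [Matrix.mulVec, dotProduct, Fin.sum_univ_four, Matrix.vecHead, Matrix.vecTail] <;>
      linarith [hx2, hx3, hv1, hv2]

/-- Let `s, s̄, x², x³` be real numbers with `|s̄| > |s|`.  Then there exists a real `4×4`
matrix `Λ` satisfying `Λᵀ η Λ = η` (where `η = diag(−1,1,1,1)`), with `det Λ = 1` and
`Λ₀₀ > 0`, such that `Λ` maps the vector `(s, s̄, x², x³)` to `(−s, −s̄, x², x³)`. -/
theorem exists_restricted_lorentz_reversing_spacelike
    (s sbar x2 x3 : ℝ) (h : |s| < |sbar|) :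
    ∃ Λ : Matrix (Fin 4) (Fin 4) ℝ,
      Λ.transpose * minkowskiEta * Λ = minkowskiEta ∧
      Λ.det = 1 ∧
      0 < Λ 0 0 ∧
      Λ.mulVec ![s, sbar, x2, x3] = ![-s, -sbar, x2, x3] := by
  by_cases hr : x2 = 0 ∧ x3 = 0
  · obtain ⟨h2, h3⟩ := hr
    subst h2; subst h3
    exact aux_lorentz s sbar 0 0 h (-1) 0 0 1 (by ring) (by ring) (by ring) (by ring)
      (by ring) (by ring)
  · have hr2 : x2^2 + x3^2 ≠ 0 := by
      intro hc
      apply hr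
      constructor <;> nlinarith [sq_nonneg x2, sq_nonneg x3]
    exact aux_lorentz s sbar x2 x3 h ((x2^2 - x3^2)/(x2^2 + x3^2)) (2*x2*x3/(x2^2 + x3^2))
      (2*x2*x3/(x2^2 + x3^2)) ((x3^2 - x2^2)/(x2^2 + x3^2))
      (by field_simp; ring) (by field_simp; ring) (by field_simp; ring)
      (by field_simp; ring) (by field_simp; ring) (by field_simp; ring)
end

section
/- Let Λ be a real 4×4 matrix with Λᵀ η Λ = η, where η = diag(−1,1,1,1). Then for all u, v ∈ ℝ⁴, the signed sum of squared 2×2 Jacobian determinants is invariant: Σ_{1≤a<b≤3} ((Λu)_a (Λv)_b − (Λu)_b (Λv)_a)² − Σ_{b=1}^{3} ((Λu)₀ (Λv)_b − (Λu)_b (Λv)₀)² = Σ_{1≤a<b≤3} (u_a v_b − u_b v_a)² − Σ_{b=1}^{3} (u₀ v_b − u_b v₀)². Consequently the surface density |ρ́_σ| of a parametrized surface, and hence the surface integrals ∫_S dρ́ and ∫_S d|ρ́|, are invariant under Lorentz transformations. -/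
/-- The signed sum of squares of the `2×2` Jacobian determinants of the pair `(u,v)`,
where determinants involving the time index `0` are counted with a minus sign
(corresponding to imaginary time).  Its absolute value is the squared surface density
`|ρ́_σ|²` of a parametrized surface with tangent vectors `u`, `v`. -/
def signedJacobianSum (u v : Fin 4 → ℝ) : ℝ :=
  ((u 1 * v 2 - u 2 * v 1) ^ 2 + (u 1 * v 3 - u 3 * v 1) ^ 2 + (u 2 * v 3 - u 3 * v 2) ^ 2)
    - ((u 0 * v 1 - u 1 * v 0) ^ 2 + (u 0 * v 2 - u 2 * v 0) ^ 2 + (u 0 * v 3 - u 3 * v 0) ^ 2)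

open Matrix in
lemma sjs_eq (u v : Fin 4 → ℝ) :
    signedJacobianSum u v =
      (u ⬝ᵥ minkowskiEta.mulVec u) * (v ⬝ᵥ minkowskiEta.mulVec v)
        - (u ⬝ᵥ minkowskiEta.mulVec v) ^ 2 := by
  simp [signedJacobianSum, minkowskiEta, Matrix.mulVec, dotProduct,
    Matrix.diagonal, Fin.sum_univ_four]
  ring

open Matrix in
lemma B_inv (Λ : Matrix (Fin 4) (Fin 4) ℝ)
    (hΛ : Λ.transpose * minkowskiEta * Λ = minkowskiEta) (u v : Fin 4 → ℝ) :
    (Λ.mulVec u) ⬝ᵥ minkowskiEta.mulVec (Λ.mulVec v) = u ⬝ᵥ minkowskiEta.mulVec v := by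
  rw [Matrix.mulVec_mulVec, Matrix.dotProduct_mulVec, ← Matrix.mulVec_transpose,
    Matrix.mulVec_mulVec, Matrix.transpose_mul]
  have hη : minkowskiEta.transpose = minkowskiEta := by
    simp [minkowskiEta]
  rw [hη, hΛ, dotProduct_comm, Matrix.dotProduct_mulVec,
    ← Matrix.mulVec_transpose, hη, dotProduct_comm]

/-- If `Λ` is a Lorentz transformation (`Λᵀ η Λ = η` with `η = diag(−1,1,1,1)`), then for all
`u, v ∈ ℝ⁴` the signed sum of squared `2×2` Jacobian determinants is invariant:
`Σ_{1≤a<b≤3} ((Λu)_a (Λv)_b − (Λu)_b (Λv)_a)² − Σ_{b=1}^{3} ((Λu)₀ (Λv)_b − (Λu)_b (Λv)₀)²`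
equals the same expression in `u, v`.  Consequently the surface density `|ρ́_σ|`, and hence
the surface integrals `∫_S dρ́` and `∫_S d|ρ́|`, are invariant under Lorentz transformations. -/
theorem signedJacobianSum_lorentz_invariant
    (Λ : Matrix (Fin 4) (Fin 4) ℝ)
    (hΛ : Λ.transpose * minkowskiEta * Λ = minkowskiEta)
    (u v : Fin 4 → ℝ) :
    signedJacobianSum (Λ.mulVec u) (Λ.mulVec v) = signedJacobianSum u v := by
  rw [sjs_eq, sjs_eq, B_inv Λ hΛ u u, B_inv Λ hΛ v v, B_inv Λ hΛ u v]
end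

section
/- Let λ̄ > 0, c₀ > 0, C̃ > 0, K > 0 and let f : (0, c₀] → ℝ be differentiable with |f(c)| ≤ C̃·c⁵ and |f′(c)| ≤ C̃·c⁴ for all c ∈ (0, c₀]. Define G(c, e) = K/e − c⁴·λ̄ + f(c) for c ∈ (0,c₀] and e > 0. Then there exist c₁ ∈ (0, c₀], a constant C₄ > 0, and a function λ : (0, c₁] → ℝ with |λ(c)| ≤ C₄·c² for all c ∈ (0,c₁], such that setting β(c) = −c/4 + λ(c) and γ = 1/2, the Callan–Symanzik equation e·∂G/∂e (c,e) + β(c)·∂G/∂c (c,e) + 2γ·G(c,e) = 0 holds for all c ∈ (0, c₁] and all e > 0. -/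
/-- Let `λ̄ > 0`, `c₀ > 0`, `C̃ > 0`, `K > 0` and let `f : (0, c₀] → ℝ` be differentiable with
`|f(c)| ≤ C̃·c⁵` and `|f′(c)| ≤ C̃·c⁴` there.  For `G(c,e) = K/e − c⁴·λ̄ + f(c)` there exist
`c₁ ∈ (0, c₀]`, a constant `C₄ > 0` and a function `λ` with `|λ(c)| ≤ C₄·c²` on `(0,c₁]`, such
that with `β(c) = −c/4 + λ(c)` and `γ = 1/2` the Callan–Symanzik equation
`e·∂G/∂e + β(c)·∂G/∂c + 2γ·G = 0` holds for all `c ∈ (0, c₁]` and all `e > 0`. -/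
theorem callan_symanzik_beta_exists
    (lamBar c₀ Ctilde K : ℝ) (hlamBar : 0 < lamBar) (hc₀ : 0 < c₀)
    (hCtilde : 0 < Ctilde) (hK : 0 < K)
    (f f' : ℝ → ℝ)
    (hdiff : ∀ c ∈ Set.Ioc (0 : ℝ) c₀, HasDerivAt f (f' c) c)
    (hfb : ∀ c ∈ Set.Ioc (0 : ℝ) c₀, |f c| ≤ Ctilde * c ^ 5)
    (hf'b : ∀ c ∈ Set.Ioc (0 : ℝ) c₀, |f' c| ≤ Ctilde * c ^ 4)
    (G : ℝ → ℝ → ℝ)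
    (hG : ∀ c e : ℝ, G c e = K / e - c ^ 4 * lamBar + f c) :
    ∃ c₁ C₄ : ℝ, ∃ lam : ℝ → ℝ,
      0 < c₁ ∧ c₁ ≤ c₀ ∧ 0 < C₄ ∧
      (∀ c ∈ Set.Ioc (0 : ℝ) c₁, |lam c| ≤ C₄ * c ^ 2) ∧
      (∀ c ∈ Set.Ioc (0 : ℝ) c₁, ∀ e : ℝ, 0 < e →
        e * deriv (fun e' => G c e') e
          + (-c / 4 + lam c) * deriv (fun c' => G c' e) c
          + 2 * (1 / 2 : ℝ) * G c e = 0) := by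
  refine ⟨min c₀ (2 * lamBar / Ctilde), 5 * Ctilde / (8 * lamBar),
    fun c => (c * f' c - 4 * f c) / (4 * (f' c - 4 * c ^ 3 * lamBar)), ?_, min_le_left _ _,
    by positivity, ?_, ?_⟩
  · exact lt_min hc₀ (by positivity)
  all_goals
    intro c hc
    have hc0 : 0 < c := hc.1
    have hcc₀ : c ∈ Set.Ioc (0 : ℝ) c₀ := ⟨hc.1, hc.2.trans (min_le_left _ _)⟩
    have hcs : Ctilde * c ≤ 2 * lamBar := by
      have := hc.2.trans (min_le_right _ _)
      calc Ctilde * c ≤ Ctilde * (2 * lamBar / Ctilde) := by nlinarith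
        _ = 2 * lamBar := by field_simp
    have hf' : |f' c| ≤ 2 * lamBar * c ^ 3 := by
      calc |f' c| ≤ Ctilde * c ^ 4 := hf'b c hcc₀
        _ = (Ctilde * c) * c ^ 3 := by ring
        _ ≤ 2 * lamBar * c ^ 3 := by nlinarith [pow_pos hc0 3]
    have hD : f' c - 4 * c ^ 3 * lamBar ≤ -(2 * lamBar * c ^ 3) := by
      have := abs_le.mp hf'
      nlinarith [pow_pos hc0 3]
    have hDne : f' c - 4 * c ^ 3 * lamBar ≠ 0 := by nlinarith [pow_pos hc0 3]
    have hDabs : 2 * lamBar * c ^ 3 ≤ |f' c - 4 * c ^ 3 * lamBar| := by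
      rw [abs_of_nonpos (by nlinarith [pow_pos hc0 3])]; linarith
  · -- bound on lam
    rw [abs_div, abs_mul]
    rw [div_le_iff₀ (by positivity : (0:ℝ) < |(4:ℝ)| * |f' c - 4 * c ^ 3 * lamBar|)]
    have hnum : |c * f' c - 4 * f c| ≤ 5 * Ctilde * c ^ 5 := by
      have h1 := hf'b c hcc₀
      have h2 := hfb c hcc₀
      calc |c * f' c - 4 * f c| ≤ |c * f' c| + |4 * f c| := abs_sub _ _
        _ = c * |f' c| + 4 * |f c| := by
            rw [abs_mul, abs_mul, abs_of_pos hc0]; norm_num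
        _ ≤ c * (Ctilde * c ^ 4) + 4 * (Ctilde * c ^ 5) := by
            have := abs_nonneg (f' c); nlinarith
        _ = 5 * Ctilde * c ^ 5 := by ring
    calc |c * f' c - 4 * f c| ≤ 5 * Ctilde * c ^ 5 := hnum
      _ ≤ 5 * Ctilde / (8 * lamBar) * c ^ 2 * (|(4:ℝ)| * (2 * lamBar * c ^ 3)) := by
          rw [abs_of_pos (by norm_num : (0:ℝ) < 4)]
          apply le_of_eq
          field_simp
          ring
      _ ≤ 5 * Ctilde / (8 * lamBar) * c ^ 2 * (|(4:ℝ)| * |f' c - 4 * c ^ 3 * lamBar|) := by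
          have h5 : (0:ℝ) ≤ 5 * Ctilde / (8 * lamBar) * c ^ 2 * |(4:ℝ)| := by positivity
          nlinarith
  · -- the CS equation
    intro e he
    have hde : deriv (fun e' => G c e') e = -(K / e ^ 2) := by
      have h1 : (fun e' => G c e') = fun e' => K * e'⁻¹ + (-(c ^ 4 * lamBar) + f c) := by
        funext e'; rw [hG]; field_simp; ring
      rw [h1]
      have : HasDerivAt (fun e' : ℝ => K * e'⁻¹ + (-(c ^ 4 * lamBar) + f c))
          (K * (-(e ^ 2)⁻¹)) e :=
        ((hasDerivAt_inv he.ne').const_mul K).add_const _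
      rw [this.deriv]; field_simp
    have hdc : deriv (fun c' => G c' e) c = -(4 * c ^ 3 * lamBar) + f' c := by
      have h1 : (fun c' => G c' e) = fun c' => K / e - c' ^ 4 * lamBar + f c' := by
        funext c'; rw [hG]
      rw [h1]
      have : HasDerivAt (fun c' : ℝ => K / e - c' ^ 4 * lamBar + f c')
          (-((4:ℕ) * c ^ (4-1) * lamBar) + f' c) c :=
        (((hasDerivAt_pow 4 c).mul_const lamBar).const_sub (K / e)).add (hdiff c hcc₀)
      rw [this.deriv]; push_cast; ring_nf
    rw [hde, hdc, hG]
    have hx : (c * f' c - 4 * f c) / (4 * (f' c - 4 * c ^ 3 * lamBar)) * (-(4 * c ^ 3 * lamBar) + f' c)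
        = (c * f' c - 4 * f c) / 4 := by
      rw [show -(4 * c ^ 3 * lamBar) + f' c = f' c - 4 * c ^ 3 * lamBar by ring, mul_comm (4:ℝ),
        ← div_div, div_mul_cancel₀ _ hDne]
    rw [add_mul, hx]
    field_simp
    ring
end

section
/- Let c₀ > 0 and K > 0 with K·c₀ < 1/8, and let λ : (0, c₀] → ℝ satisfy |λ(x)| ≤ K·x² for all x ∈ (0, c₀]. Suppose c : [t₀, ∞) → (0, c₀] is differentiable and satisfies the beta-function flow equation c′(t) = −c(t)/4 + λ(c(t)) for all t ≥ t₀. Then there exist constants Ĉ > 0 and M > 0 such that |1/c(t) − Ĉ·e^{t/4}| ≤ M for all t ≥ t₀. Equivalently, writing t = ln Ñ, the renormalization scale κ = 1/c satisfies κ = Ĉ·Ñ^{1/4} + R(Ñ) with |R| uniformly bounded. -/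
/-- Let `c₀ > 0`, `K > 0` with `K·c₀ < 1/8`, and `λ : (0, c₀] → ℝ` with `|λ(x)| ≤ K·x²`.
If `c : [t₀, ∞) → (0, c₀]` is differentiable with `c′(t) = −c(t)/4 + λ(c(t))` for `t ≥ t₀`
(the beta-function flow of the coupling constant), then there exist constants `Ĉ > 0` and
`M > 0` such that `|1/c(t) − Ĉ·e^{t/4}| ≤ M` for all `t ≥ t₀`; equivalently, writing
`t = ln Ñ`, the renormalization scale `κ = 1/c` satisfies `κ = Ĉ·Ñ^{1/4} + R(Ñ)` with `R`
uniformly bounded. -/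
theorem coupling_flow_asymptotics
    (c₀ K t₀ : ℝ) (hc₀ : 0 < c₀) (hK : 0 < K) (hKc₀ : K * c₀ < 1 / 8)
    (lam : ℝ → ℝ) (hlam : ∀ x ∈ Set.Ioc (0 : ℝ) c₀, |lam x| ≤ K * x ^ 2)
    (c : ℝ → ℝ)
    (hrange : ∀ t : ℝ, t₀ ≤ t → c t ∈ Set.Ioc (0 : ℝ) c₀)
    (hflow : ∀ t : ℝ, t₀ ≤ t → HasDerivAt c (-(c t) / 4 + lam (c t)) t) :
    ∃ Chat M : ℝ, 0 < Chat ∧ 0 < M ∧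
      ∀ t : ℝ, t₀ ≤ t → |1 / c t - Chat * Real.exp (t / 4)| ≤ M := by
  have hc0 : ∀ t, t₀ ≤ t → 0 < c t := fun t ht => (hrange t ht).1
  have hlc : ∀ t, t₀ ≤ t → |lam (c t)| ≤ K * (c t) ^ 2 := fun t ht => hlam _ (hrange t ht)
  -- derivative of e^{-t/4}
  have hexp : ∀ t : ℝ, HasDerivAt (fun s : ℝ => Real.exp (-s / 4)) (-Real.exp (-t / 4) / 4) t := by
    intro t
    have h1 : HasDerivAt (fun s : ℝ => -s / 4) (-1 / 4 : ℝ) t := by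
      simpa using (hasDerivAt_id t).neg.div_const 4
    have h2 := (Real.hasDerivAt_exp (-t / 4)).comp t h1
    exact h2.congr_deriv (by ring)
  set h : ℝ → ℝ := fun t => Real.exp (-t / 4) / c t + 4 * K * Real.exp (-t / 4) with hh
  set l : ℝ → ℝ := fun t => Real.exp (-t / 4) / c t - 4 * K * Real.exp (-t / 4) with hl
  have hderφ : ∀ t, t₀ ≤ t → HasDerivAt (fun s => Real.exp (-s / 4) / c s)
      (-(Real.exp (-t / 4) * lam (c t)) / (c t) ^ 2) t := by
    intro t ht
    have hne : c t ≠ 0 := ne_of_gt (hc0 t ht)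
    have h2 := (hexp t).div (hflow t ht) hne
    refine h2.congr_deriv ?_
    field_simp
    ring
  have hderh : ∀ t, t₀ ≤ t → HasDerivAt h
      (-(Real.exp (-t / 4) * lam (c t)) / (c t) ^ 2 + 4 * K * (-Real.exp (-t / 4) / 4)) t := by
    intro t ht
    exact (hderφ t ht).add ((hexp t).const_mul (4 * K))
  have hderl : ∀ t, t₀ ≤ t → HasDerivAt l
      (-(Real.exp (-t / 4) * lam (c t)) / (c t) ^ 2 - 4 * K * (-Real.exp (-t / 4) / 4)) t := by
    intro t ht
    exact (hderφ t ht).sub ((hexp t).const_mul (4 * K))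
  -- bound on the derivative of g
  have hkey : ∀ t, t₀ ≤ t →
      |(-(Real.exp (-t / 4) * lam (c t)) / (c t) ^ 2)| ≤ K * Real.exp (-t / 4) := by
    intro t ht
    have hcpos : 0 < c t := hc0 t ht
    have hE : 0 < Real.exp (-t / 4) := Real.exp_pos _
    have h1 := hlc t ht
    rw [abs_div, abs_neg, abs_mul, abs_of_pos hE, abs_of_pos (pow_pos hcpos 2)]
    rw [div_le_iff₀ (pow_pos hcpos 2)]
    calc Real.exp (-t / 4) * |lam (c t)| ≤ Real.exp (-t / 4) * (K * (c t) ^ 2) := by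
          exact mul_le_mul_of_nonneg_left h1 hE.le
      _ = K * Real.exp (-t / 4) * (c t) ^ 2 := by ring
  -- h is antitone
  have hhanti : AntitoneOn h (Set.Ici t₀) := by
    apply antitoneOn_of_deriv_nonpos (convex_Ici t₀)
    · intro x hx
      exact (hderh x hx).continuousAt.continuousWithinAt
    · intro x hx
      rw [interior_Ici] at hx
      exact (hderh x hx.le).differentiableAt.differentiableWithinAt
    · intro x hx
      rw [interior_Ici] at hx
      rw [(hderh x hx.le).deriv]
      have := abs_le.mp (hkey x hx.le)
      linarith [this.2]
  -- l is monotone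
  have hlmono : MonotoneOn l (Set.Ici t₀) := by
    apply monotoneOn_of_deriv_nonneg (convex_Ici t₀)
    · intro x hx
      exact (hderl x hx).continuousAt.continuousWithinAt
    · intro x hx
      rw [interior_Ici] at hx
      exact (hderl x hx.le).differentiableAt.differentiableWithinAt
    · intro x hx
      rw [interior_Ici] at hx
      rw [(hderl x hx.le).deriv]
      have := abs_le.mp (hkey x hx.le)
      linarith [this.1]
  -- l ≤ h pointwise on the domain
  have hlh : ∀ t, t₀ ≤ t → l t ≤ h t := by
    intro t ht
    have hE : 0 < Real.exp (-t / 4) := Real.exp_pos _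
    simp only [hh, hl]
    nlinarith
  -- l t ≤ h s for all s, t ≥ t₀
  have hlhs : ∀ t, t₀ ≤ t → ∀ s, t₀ ≤ s → l t ≤ h s := by
    intro t ht s hs
    rcases le_total t s with hts | hst
    · exact le_trans (hlmono ht hs hts) (hlh s hs)
    · exact le_trans (hlh t ht) (hhanti hs ht hst)
  set Chat := sInf (h '' Set.Ici t₀) with hChat
  have hbdd : BddBelow (h '' Set.Ici t₀) := by
    refine ⟨l t₀, ?_⟩
    rintro y ⟨s, hs, rfl⟩
    exact hlhs t₀ le_rfl s hs
  have hne : (h '' Set.Ici t₀).Nonempty := ⟨h t₀, ⟨t₀, Set.self_mem_Ici, rfl⟩⟩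
  have hCle : ∀ t, t₀ ≤ t → Chat ≤ h t := fun t ht => csInf_le hbdd ⟨t, ht, rfl⟩
  have hleC : ∀ t, t₀ ≤ t → l t ≤ Chat := by
    intro t ht
    apply le_csInf hne
    rintro y ⟨s, hs, rfl⟩
    exact hlhs t ht s hs
  -- Chat is positive
  have hCpos : 0 < Chat := by
    refine lt_of_lt_of_le ?_ (hleC t₀ le_rfl)
    simp only [hl]
    have hE : 0 < Real.exp (-t₀ / 4) := Real.exp_pos _
    have hc : 0 < c t₀ := hc0 t₀ le_rfl
    have hcle : c t₀ ≤ c₀ := (hrange t₀ le_rfl).2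
    have h8K : 8 * K < 1 / c₀ := by
      rw [lt_div_iff₀ hc₀]; linarith
    have h1 : 1 / c₀ ≤ 1 / c t₀ := one_div_le_one_div_of_le hc hcle
    rw [sub_pos, div_eq_mul_inv]
    have : 4 * K < (c t₀)⁻¹ := by
      rw [← one_div]
      linarith
    calc 4 * K * Real.exp (-t₀ / 4) < (c t₀)⁻¹ * Real.exp (-t₀ / 4) := by
          exact mul_lt_mul_of_pos_right this hE
      _ = Real.exp (-t₀ / 4) * (c t₀)⁻¹ := by ring
  refine ⟨Chat, 4 * K, hCpos, by linarith, ?_⟩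
  intro t ht
  have hE : 0 < Real.exp (t / 4) := Real.exp_pos _
  have hEE : Real.exp (-t / 4) * Real.exp (t / 4) = 1 := by
    rw [← Real.exp_add, neg_div, neg_add_cancel, Real.exp_zero]
  have h1 := hCle t ht
  have h2 := hleC t ht
  simp only [hh, hl] at h1 h2
  have hc : 0 < c t := hc0 t ht
  rw [abs_le]
  constructor
  · -- -(4K) ≤ 1/c t - Chat * e^{t/4}, i.e. Chat * e^{t/4} ≤ 1/c t + 4K
    have : Chat * Real.exp (t / 4) ≤ (Real.exp (-t / 4) / c t + 4 * K * Real.exp (-t / 4)) * Real.exp (t / 4) :=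
      mul_le_mul_of_nonneg_right h1 hE.le
    have heq : (Real.exp (-t / 4) / c t + 4 * K * Real.exp (-t / 4)) * Real.exp (t / 4)
        = 1 / c t + 4 * K := by
      rw [neg_div] at hEE
      field_simp
      linear_combination hEE
    linarith [heq ▸ this]
  · -- 1/c t - Chat * e^{t/4} ≤ 4K
    have : (Real.exp (-t / 4) / c t - 4 * K * Real.exp (-t / 4)) * Real.exp (t / 4) ≤ Chat * Real.exp (t / 4) :=
      mul_le_mul_of_nonneg_right h2 hE.le
    have heq : (Real.exp (-t / 4) / c t - 4 * K * Real.exp (-t / 4)) * Real.exp (t / 4)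
        = 1 / c t - 4 * K := by
      rw [neg_div] at hEE
      field_simp
      linear_combination (1 - 4 * K * c t) * hEE
    linarith [heq ▸ this]
end

section
/- Let k̄, l̄, k̲, l̲ be natural numbers with l̄ ≥ 1, k̲ ≥ 1, k̄ > l̄, and k̄ + k̲ = l̄ + l̲. Set r = k̄ + l̄ and s = k̲ + l̲, and define the index sets A = {1, …, k̄} ∪ {r+1, …, r+k̲} and B = {k̄+1, …, k̄+l̄} ∪ {r+k̲+1, …, r+k̲+l̲} inside {1, …, r+s}. Then there exists a bijection G : A → B such that a < G(a) for every a ∈ A, and moreover there exists a ∈ A with a ≤ r < G(a). -/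
/-- Let `k̄, l̄, k̲, l̲ ∈ ℕ` with `l̄ ≥ 1`, `k̲ ≥ 1`, `k̄ > l̄` and `k̄ + k̲ = l̄ + l̲`.  Set
`r = k̄ + l̄`, `s = k̲ + l̲` and consider the index sets
`A = {1,…,k̄} ∪ {r+1,…,r+k̲}` (annihilation indices) and
`B = {k̄+1,…,k̄+l̄} ∪ {r+k̲+1,…,r+k̲+l̲}` (creation indices) inside `{1,…,r+s}`.
Then there exists a bijection `G : A → B` with `a < G(a)` for every `a ∈ A`, and moreover
some `a ∈ A` satisfies `a ≤ r < G(a)` (a pair straddling position `r`). -/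
theorem annihilation_creation_pairing
    (kbar lbar kund lund : ℕ)
    (hlbar : 1 ≤ lbar) (hkund : 1 ≤ kund) (hkl : lbar < kbar)
    (hbalance : kbar + kund = lbar + lund) :
    ∀ r s : ℕ, r = kbar + lbar → s = kund + lund →
    ∀ A B : Set ℕ,
      A = Set.Icc 1 kbar ∪ Set.Icc (r + 1) (r + kund) →
      B = Set.Icc (kbar + 1) (kbar + lbar) ∪ Set.Icc (r + kund + 1) (r + kund + lund) →
      ∃ G : A ≃ B,
        (∀ a : A, (a : ℕ) < ((G a : ℕ))) ∧
        (∃ a : A, (a : ℕ) ≤ r ∧ r < ((G a : ℕ))) := by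
  intro r s hr hs A B hA hB
  subst hr hs hA hB
  set f : ℕ → ℕ := fun a =>
    if a ≤ lbar then a + kbar
    else if a ≤ kbar then a + kbar + kund
    else a + kund + (kbar - lbar) with hf
  set g : ℕ → ℕ := fun b =>
    if b ≤ kbar + lbar then b - kbar
    else if b ≤ kbar + lbar + kund + (kbar - lbar) then b - kbar - kund
    else b - kund - (kbar - lbar) with hg
  have hfmem : ∀ a : ℕ, a ∈ Set.Icc 1 kbar ∪ Set.Icc (kbar + lbar + 1) (kbar + lbar + kund) →
      f a ∈ Set.Icc (kbar + 1) (kbar + lbar) ∪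
        Set.Icc (kbar + lbar + kund + 1) (kbar + lbar + kund + lund) := by
    intro a ha
    simp only [Set.mem_union, Set.mem_Icc] at ha ⊢
    simp only [hf]
    split_ifs <;> omega
  have hgmem : ∀ b : ℕ, b ∈ Set.Icc (kbar + 1) (kbar + lbar) ∪
        Set.Icc (kbar + lbar + kund + 1) (kbar + lbar + kund + lund) →
      g b ∈ Set.Icc 1 kbar ∪ Set.Icc (kbar + lbar + 1) (kbar + lbar + kund) := by
    intro b hb
    simp only [Set.mem_union, Set.mem_Icc] at hb ⊢
    simp only [hg]
    split_ifs <;> omega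
  refine ⟨⟨fun a => ⟨f a, hfmem a a.2⟩, fun b => ⟨g b, hgmem b b.2⟩, ?_, ?_⟩, ?_, ?_⟩
  · rintro ⟨a, ha⟩
    simp only [Set.mem_union, Set.mem_Icc] at ha
    apply Subtype.ext
    simp only [hf, hg]
    split_ifs <;> omega
  · rintro ⟨b, hb⟩
    simp only [Set.mem_union, Set.mem_Icc] at hb
    apply Subtype.ext
    simp only [hf, hg]
    split_ifs <;> omega
  · rintro ⟨a, ha⟩
    simp only [Set.mem_union, Set.mem_Icc] at ha
    simp only [Equiv.coe_fn_mk, hf]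
    split_ifs <;> omega
  · have hm : lbar + 1 ∈ Set.Icc 1 kbar ∪
        Set.Icc (kbar + lbar + 1) (kbar + lbar + kund) := by
      simp only [Set.mem_union, Set.mem_Icc]; omega
    refine ⟨⟨lbar + 1, hm⟩, ?_, ?_⟩
    · show lbar + 1 ≤ kbar + lbar
      omega
    · show kbar + lbar < f (lbar + 1)
      simp only [hf]
      split_ifs <;> omega
end
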